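/- Let zs : Stream' α be a stream of period 2, i.e. zs.get (n+2) = zs.get n for all n. If xs is a list of odd length, then zs ▷ (xs ++ [z] ++ ys) = (zs ▷ xs) ++ [z] ++ (zs ▷ ys) for all lists ys and elements z. -/

import Mathlib

inductive Turn : Type
  | L
  | R
deriving DecidableEq

open Turn

def inv : Turn → Turn
  | L => R
  | R => L

def interleave {α : Type*} : Stream' α → List α → List α
  | zs, [] => [zs.head]
  | zs, y :: ys => zs.head :: y :: interleave zs.tail ys

infixr:67 " ▷ " => interleave

def lr : Stream' Turn := fun n => if n % 2 = 0 then L else R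

def rl : Stream' Turn := fun n => if n % 2 = 0 then R else L

theorem interleave_periodic_append {α : Type*} (zs : Stream' α)
    (hper : ∀ n, zs.get (n + 2) = zs.get n)
    (xs : List α) (hodd : Odd xs.length) :
    ∀ (ys : List α) (z : α),
      zs ▷ (xs ++ [z] ++ ys) = (zs ▷ xs) ++ [z] ++ (zs ▷ ys) := by
  have htt : zs.tail.tail = zs := by
    funext n
    exact hper n
  obtain ⟨k, hk⟩ := hodd
  induction k generalizing xs with
  | zero =>
    simp only [Nat.mul_zero, Nat.zero_add] at hk
    obtain ⟨a, rfl⟩ := List.length_eq_one_iff.mp hk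
    intro ys z
    simp [interleave, htt]
  | succ k ih =>
    match xs, hk with
    | a :: b :: xs', hk =>
      intro ys z
      have hk' : xs'.length = 2 * k + 1 := by
        simp at hk; omega
      simp only [List.cons_append, interleave, htt]
      rw [ih xs' hk' ys z]
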